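/- arXiv:math/0412561 — 3 statements merged into one kernel-verified Lean document; each statement's English description precedes it below -/
import Mathlib

section
/- Let R be a commutative ring, A and B R-algebras with an R-algebra morphism β : A → B, T an A-ring and S a B-ring with a morphism of A-rings ξ : S → T. Let K be a right T-module and L a right S-module. If the induced right S-module K ⊗_A B is L-subgenerated, then for every K-subgenerated right T-module M the induced right S-module M ⊗_A B is L-subgenerated; hence the induction functor − ⊗_A B : M_T → M_S restricts to a functor σ[K_T] → σ[L_S]. -/
/-!
The map `k ↦ k ⊗ 1` from `K` to `K ⊗_A B` has the retraction `k ⊗ b ↦ k ξ(b)`, so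
`ξ (Ann_S (k ⊗ 1)) ⊆ Ann_T k`. If a finite `W ⊆ K` witnesses that `m ∈ M` is
`K`-subgenerated, then the union of the finite subsets of `L` witnessing the elements `k ⊗ 1`,
`k ∈ W`, witnesses `m ⊗ b`: an `s ∈ S` annihilating it makes `ξ s` annihilate `W`, hence `m`.
Sums of such tensors are handled by unions of witnesses.
-/

open MulOpposite

/-! ## A tensor product of a right module and a left module over a
(possibly noncommutative) ring `A`. -/

namespace NCT

variable (A : Type*) [Ring A]
variable (M : Type*) [AddCommGroup M] [Module Aᵐᵒᵖ M]
variable (N : Type*) [AddCommGroup N] [Module A N]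

/-- The subgroup of relations defining `M ⊗_A N`. -/
noncomputable def rel : AddSubgroup (TensorProduct ℤ M N) :=
  AddSubgroup.closure
    {z | ∃ (a : A) (m : M) (n : N), z = (op a • m) ⊗ₜ[ℤ] n - m ⊗ₜ[ℤ] (a • n)}

/-- The tensor product `M ⊗_A N` of a right `A`-module `M` and a left `A`-module `N`
over a possibly noncommutative ring `A`. -/
abbrev T := TensorProduct ℤ M N ⧸ rel A M N

/-- The canonical map `M × N → M ⊗_A N`. -/
noncomputable def tmul (m : M) (n : N) : T A M N := QuotientAddGroup.mk (m ⊗ₜ[ℤ] n)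

variable {A M N}

lemma add_tmul (m m' : M) (n : N) :
    tmul A M N (m + m') n = tmul A M N m n + tmul A M N m' n := by
  show QuotientAddGroup.mk _ = _
  rw [TensorProduct.add_tmul, QuotientAddGroup.mk_add]; rfl

lemma tmul_add (m : M) (n n' : N) :
    tmul A M N m (n + n') = tmul A M N m n + tmul A M N m n' := by
  show QuotientAddGroup.mk _ = _
  rw [TensorProduct.tmul_add, QuotientAddGroup.mk_add]; rfl

lemma zero_tmul (n : N) : tmul A M N 0 n = 0 := by
  show QuotientAddGroup.mk _ = _
  rw [TensorProduct.zero_tmul]; rfl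

lemma tmul_zero (m : M) : tmul A M N m 0 = 0 := by
  show QuotientAddGroup.mk _ = _
  rw [TensorProduct.tmul_zero]; rfl

/-- The balancedness relation `(m · a) ⊗ n = m ⊗ (a · n)`. -/
lemma balanced (a : A) (m : M) (n : N) :
    tmul A M N (op a • m) n = tmul A M N m (a • n) := by
  apply QuotientAddGroup.eq.mpr
  have h : (op a • m) ⊗ₜ[ℤ] n - m ⊗ₜ[ℤ] (a • n) ∈ rel A M N :=
    AddSubgroup.subset_closure ⟨a, m, n, rfl⟩
  have := (rel A M N).neg_mem h
  rw [neg_sub] at this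
  rw [neg_add_eq_sub]
  exact this

@[elab_as_elim] lemma induction_on {p : T A M N → Prop} (z : T A M N)
    (zero : p 0) (tm : ∀ m n, p (tmul A M N m n))
    (add : ∀ x y, p x → p y → p (x + y)) : p z := by
  obtain ⟨x, rfl⟩ := QuotientAddGroup.mk_surjective z
  induction x using TensorProduct.induction_on with
  | zero => exact zero
  | tmul m n => exact tm m n
  | add x y hx hy => rw [QuotientAddGroup.mk_add]; exact add _ _ hx hy

/-- Lift a biadditive `A`-balanced map to the tensor product. -/
noncomputable def lift₂ {P : Type*} [AddCommGroup P] (f : M → N → P)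
    (h₁ : ∀ m m' n, f (m + m') n = f m n + f m' n)
    (h₂ : ∀ m n n', f m (n + n') = f m n + f m n')
    (hb : ∀ (a : A) m n, f (op a • m) n = f m (a • n)) : T A M N →+ P := by
  refine QuotientAddGroup.lift _ (TensorProduct.liftAddHom
    (AddMonoidHom.mk' (fun m => AddMonoidHom.mk' (f m) (h₂ m))
      (fun m m' => by ext n; exact h₁ m m' n)) ?_) ?_
  · intro r m n
    show f (r • m) n = f m (r • n)
    set F : M →+ (N →+ P) := AddMonoidHom.mk' (fun m => AddMonoidHom.mk' (f m) (h₂ m))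
      (fun m m' => by ext n; exact h₁ m m' n) with hF
    calc f (r • m) n = (F (r • m)) n := rfl
      _ = (r • F m) n := by rw [AddMonoidHom.map_zsmul]
      _ = r • f m n := rfl
      _ = f m (r • n) := (AddMonoidHom.map_zsmul (AddMonoidHom.mk' (f m) (h₂ m)) _ _).symm
  · refine (AddSubgroup.closure_le _).2 ?_
    rintro x ⟨a, m, n, rfl⟩
    simp only [SetLike.mem_coe, AddMonoidHom.mem_ker, map_sub,
      TensorProduct.liftAddHom_tmul]
    show f (op a • m) n - f m (a • n) = 0
    rw [hb, sub_self]

@[simp] lemma lift₂_tmul {P : Type*} [AddCommGroup P] (f : M → N → P)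
    (h₁ : ∀ m m' n, f (m + m') n = f m n + f m' n)
    (h₂ : ∀ m n n', f m (n + n') = f m n + f m n')
    (hb : ∀ (a : A) m n, f (op a • m) n = f m (a • n)) (m : M) (n : N) :
    lift₂ f h₁ h₂ hb (tmul A M N m n) = f m n := rfl

lemma hom_ext {P : Type*} [AddCommGroup P] {g h : T A M N →+ P}
    (H : ∀ m n, g (tmul A M N m n) = h (tmul A M N m n)) : g = h := by
  refine AddMonoidHom.ext fun z => ?_
  refine induction_on z (by simp) H fun x y hx hy => by rw [map_add, map_add, hx, hy]

/-- A left module structure on the tensor product induced from a left action on the first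
factor commuting with the right `A`-action. -/
noncomputable instance instLeftModule (S : Type*) [Semiring S] [Module S M]
    [SMulCommClass S Aᵐᵒᵖ M] : Module S (T A M N) where
  smul s z := lift₂ (fun m n => tmul A M N (s • m) n)
    (fun m m' n => by (try dsimp only); rw [smul_add, add_tmul])
    (fun m n n' => by (try dsimp only); rw [tmul_add])
    (fun a m n => by (try dsimp only); rw [smul_comm, balanced]) z
  one_smul z := by
    show lift₂ _ _ _ _ z = z
    refine induction_on z (by simp) (fun m n => by simp [zero_tmul, tmul_zero]) fun x y hx hy => by
      rw [map_add, hx, hy]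
  mul_smul r s z := by
    show lift₂ _ _ _ _ z = lift₂ _ _ _ _ (lift₂ _ _ _ _ z)
    refine induction_on z (by simp) (fun m n => by simp [mul_smul]) fun x y hx hy => by
      simp only [map_add, hx, hy]
  smul_zero s := by show lift₂ _ _ _ _ 0 = 0; simp
  smul_add s x y := by show lift₂ _ _ _ _ (x + y) = _; rw [map_add]; rfl
  add_smul r s z := by
    show lift₂ _ _ _ _ z = lift₂ _ _ _ _ z + lift₂ _ _ _ _ z
    refine induction_on z (by simp) (fun m n => by simp [add_smul, add_tmul]) fun x y hx hy => by
      simp only [map_add, hx, hy]; abel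
  zero_smul z := by
    show lift₂ _ _ _ _ z = 0
    refine induction_on z (by simp) (fun m n => by simp [zero_tmul, tmul_zero]) fun x y hx hy => by
      rw [map_add, hx, hy, add_zero]

lemma smul_tmul' {S : Type*} [Semiring S] [Module S M] [SMulCommClass S Aᵐᵒᵖ M]
    (s : S) (m : M) (n : N) : s • tmul A M N m n = tmul A M N (s • m) n := rfl

/-- A right module structure on the tensor product induced from a right action on the
second factor commuting with the left `A`-action. -/
noncomputable instance instRightModule (S : Type*) [Semiring S] [Module Sᵐᵒᵖ N]
    [SMulCommClass A Sᵐᵒᵖ N] : Module Sᵐᵒᵖ (T A M N) where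
  smul s z := lift₂ (fun m n => tmul A M N m (s • n))
    (fun m m' n => by (try dsimp only); rw [add_tmul])
    (fun m n n' => by (try dsimp only); rw [smul_add, tmul_add])
    (fun a m n => by (try dsimp only); rw [balanced, smul_comm]) z
  one_smul z := by
    show lift₂ _ _ _ _ z = z
    refine induction_on z (by simp) (fun m n => by simp [zero_tmul, tmul_zero]) fun x y hx hy => by
      rw [map_add, hx, hy]
  mul_smul r s z := by
    show lift₂ _ _ _ _ z = lift₂ _ _ _ _ (lift₂ _ _ _ _ z)
    refine induction_on z (by simp) (fun m n => by simp [mul_smul]) fun x y hx hy => by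
      simp only [map_add, hx, hy]
  smul_zero s := by show lift₂ _ _ _ _ 0 = 0; simp
  smul_add s x y := by show lift₂ _ _ _ _ (x + y) = _; rw [map_add]; rfl
  add_smul r s z := by
    show lift₂ _ _ _ _ z = lift₂ _ _ _ _ z + lift₂ _ _ _ _ z
    refine induction_on z (by simp) (fun m n => by simp [add_smul, tmul_add]) fun x y hx hy => by
      simp only [map_add, hx, hy]; abel
  zero_smul z := by
    show lift₂ _ _ _ _ z = 0
    refine induction_on z (by simp) (fun m n => by simp [zero_tmul, tmul_zero]) fun x y hx hy => by
      rw [map_add, hx, hy, add_zero]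

lemma tmul_smul' {S : Type*} [Semiring S] [Module Sᵐᵒᵖ N] [SMulCommClass A Sᵐᵒᵖ N]
    (s : Sᵐᵒᵖ) (m : M) (n : N) : s • tmul A M N m n = tmul A M N m (s • n) := rfl

end NCT

/-- `X` is an `L`-subgenerated right `S`-module: every element of `X` has an annihilator
containing the annihilator of a finite subset of `L`.  (This is the elementwise
characterization of membership in the trace `Sp (σ[L], X)`.) -/
def IsSubgenBy (S : Type*) [Ring S] (L : Type*) [AddCommGroup L] [Module Sᵐᵒᵖ L]
    (X : Type*) [AddCommGroup X] [Module Sᵐᵒᵖ X] : Prop :=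
  ∀ x : X, ∃ W : Finset L, ∀ s : S,
    (∀ w ∈ W, MulOpposite.op s • w = 0) → MulOpposite.op s • x = 0

section Subgen

variable (S : Type*) [Ring S] (L : Type*) [AddCommGroup L] [Module Sᵐᵒᵖ L]
  {X : Type*} [AddCommGroup X] [Module Sᵐᵒᵖ X]

/-- Membership in the largest `L`-subgenerated submodule `Sp (σ[L], X)`. -/
def IsSubgenElem (x : X) : Prop :=
  ∃ W : Finset L, ∀ s : S, (∀ w ∈ W, op s • w = 0) → op s • x = 0

theorem isSubgenBy_iff : IsSubgenBy S L X ↔ ∀ x : X, IsSubgenElem S L x := Iff.rfl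

variable {S L}

theorem IsSubgenElem.zero : IsSubgenElem S L (0 : X) :=
  ⟨∅, fun _ _ => smul_zero _⟩

theorem IsSubgenElem.add {x y : X} (hx : IsSubgenElem S L x) (hy : IsSubgenElem S L y) :
    IsSubgenElem S L (x + y) := by
  classical
  obtain ⟨W₁, hW₁⟩ := hx
  obtain ⟨W₂, hW₂⟩ := hy
  refine ⟨W₁ ∪ W₂, fun s hs => ?_⟩
  rw [smul_add, hW₁ s fun w hw => hs w (Finset.mem_union_left _ hw),
    hW₂ s fun w hw => hs w (Finset.mem_union_right _ hw), add_zero]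

theorem IsSubgenElem.of_finset {Y : Type*} [AddCommGroup Y] [Module Sᵐᵒᵖ Y] {x : X}
    (V : Finset Y) (hV : ∀ y ∈ V, IsSubgenElem S L y)
    (hx : ∀ s : S, (∀ y ∈ V, op s • y = 0) → op s • x = 0) : IsSubgenElem S L x := by
  classical
  choose! W hW using hV
  exact ⟨V.biUnion W, fun s hs =>
    hx s fun y hy => hW y hy s fun w hw => hs w (Finset.mem_biUnion.mpr ⟨y, hy, hw⟩)⟩

end Subgen

namespace NCT

variable {A : Type*} [Ring A] {T : Type*} [Ring T] (ηT : A →+* T)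
  {K : Type*} [AddCommGroup K] [Module Tᵐᵒᵖ K] [Module Aᵐᵒᵖ K]
  {B : Type*} [Ring B] [Module A B]

noncomputable def actLift (hKA : ∀ (a : A) (k : K), op a • k = op (ηT a) • k)
    (θ : B →+* T) (hθ : ∀ (a : A) (b : B), θ (a • b) = ηT a * θ b) :
    NCT.T A K B →+ K :=
  lift₂ (fun k b => op (θ b) • k) (fun _ _ _ => smul_add _ _ _)
    (fun (k : K) b b' => by simp only [map_add, op_add, add_smul])
    (fun a k b => by simp only [hθ, op_mul, mul_smul, hKA])

theorem actLift_tmul (hKA : ∀ (a : A) (k : K), op a • k = op (ηT a) • k)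
    (θ : B →+* T) (hθ : ∀ (a : A) (b : B), θ (a • b) = ηT a * θ b) (k : K) (b : B) :
    actLift ηT hKA θ hθ (tmul A K B k b) = op (θ b) • k :=
  rfl

theorem smul_eq_zero_of_smul_tmul_one_eq_zero
    (hKA : ∀ (a : A) (k : K), op a • k = op (ηT a) • k)
    {S : Type*} [Ring S] (ηS : B →+* S) (ξ : S →+* T)
    (hθ : ∀ (a : A) (b : B), ξ (ηS (a • b)) = ηT a * ξ (ηS b))
    [Module Sᵐᵒᵖ (NCT.T A K B)]
    (hact : ∀ (s : S) (k : K) (b : B), op s • tmul A K B k b = tmul A K B (op (ξ s) • k) b)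
    {s : S} {k : K} (hs : op s • tmul A K B k 1 = 0) : op (ξ s) • k = 0 := by
  have := congrArg (actLift ηT hKA (ξ.comp ηS) hθ) (hact s k 1 ▸ hs)
  rwa [actLift_tmul, map_zero, map_one, op_one, one_smul] at this

end NCT

open MulOpposite NCT in
theorem statement0_general
    (R : Type*) [CommRing R] (A : Type*) [Ring A] [Algebra R A]
    (B : Type*) [Ring B] [Algebra R B] (β : A →ₐ[R] B)
    (T : Type*) [Ring T] (ηT : A →+* T)
    (S : Type*) [Ring S] (ηS : B →+* S)
    (ξ : S →+* T) (hξ : ∀ a : A, ξ (ηS (β a)) = ηT a)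
    (K : Type*) [AddCommGroup K] [Module Tᵐᵒᵖ K]
    [Module Aᵐᵒᵖ K] (hKA : ∀ (a : A) (k : K), op a • k = op (ηT a) • k)
    (L : Type*) [AddCommGroup L] [Module Sᵐᵒᵖ L]
    [Module A B] (hAB : ∀ (a : A) (b : B), a • b = β a * b)
    [Module Sᵐᵒᵖ (NCT.T A K B)]
    (hactK : ∀ (s : S) (k : K) (b : B),
      op s • NCT.tmul A K B k b = NCT.tmul A K B (op (ξ s) • k) b)
    -- hypothesis: `K ⊗_A B` is `L`-subgenerated
    (hKB : IsSubgenBy S L (NCT.T A K B))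
    -- an arbitrary `K`-subgenerated right `T`-module `M`
    (M : Type*) [AddCommGroup M] [Module Tᵐᵒᵖ M]
    [Module Aᵐᵒᵖ M]
    [Module Sᵐᵒᵖ (NCT.T A M B)]
    (hactM : ∀ (s : S) (m : M) (b : B),
      op s • NCT.tmul A M B m b = NCT.tmul A M B (op (ξ s) • m) b)
    (hM : IsSubgenBy T K M) :
    IsSubgenBy S L (NCT.T A M B) := by
  classical
  have hθ : ∀ (a : A) (b : B), ξ (ηS (a • b)) = ηT a * ξ (ηS b) := fun a b => by
    rw [hAB, map_mul, map_mul, hξ]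
  refine (isSubgenBy_iff S L).2 fun z => ?_
  induction z using NCT.induction_on with
  | zero => exact IsSubgenElem.zero
  | add x y hx hy => exact hx.add hy
  | tm m b =>
    obtain ⟨W, hW⟩ := hM m
    refine IsSubgenElem.of_finset (W.image (tmul A K B · 1))
      (Finset.forall_mem_image.mpr fun k _ => hKB _) fun s hs => ?_
    have hξW : ∀ k ∈ W, op (ξ s) • k = 0 := fun k hk =>
      smul_eq_zero_of_smul_tmul_one_eq_zero ηT hKA ηS ξ hθ hactK
        (hs _ (Finset.mem_image_of_mem _ hk))
    rw [hactM, hW (ξ s) hξW, zero_tmul]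

open MulOpposite NCT in
/-- Let `ξ : S → T` be a morphism of `A`-rings (`T` an `A`-ring, `S` a `B`-ring), `K` a
right `T`-module and `L` a right `S`-module.  If the induced right `S`-module `K ⊗_A B`
(with `S`-action `(k ⊗ b) ↼ s = k ξ(s) ⊗ b`) is `L`-subgenerated, then for every
`K`-subgenerated right `T`-module `M` the induced right `S`-module `M ⊗_A B` is
`L`-subgenerated; hence the induction functor `- ⊗_A B : 𝕄_T → 𝕄_S` restricts to a functor
`σ[K_T] → σ[L_S]`. -/
theorem statement0
    (R : Type*) [CommRing R] (A : Type*) [Ring A] [Algebra R A]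
    (B : Type*) [Ring B] [Algebra R B] (β : A →ₐ[R] B)
    (T : Type*) [Ring T] (ηT : A →+* T)
    (S : Type*) [Ring S] (ηS : B →+* S)
    (ξ : S →+* T) (hξ : ∀ a : A, ξ (ηS (β a)) = ηT a)
    (K : Type*) [AddCommGroup K] [Module Tᵐᵒᵖ K]
    [Module Aᵐᵒᵖ K] (hKA : ∀ (a : A) (k : K), op a • k = op (ηT a) • k)
    (L : Type*) [AddCommGroup L] [Module Sᵐᵒᵖ L]
    [Module A B] (hAB : ∀ (a : A) (b : B), a • b = β a * b)
    [Module Sᵐᵒᵖ (NCT.T A K B)]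
    (hactK : ∀ (s : S) (k : K) (b : B),
      op s • NCT.tmul A K B k b = NCT.tmul A K B (op (ξ s) • k) b)
    -- hypothesis: `K ⊗_A B` is `L`-subgenerated
    (hKB : IsSubgenBy S L (NCT.T A K B))
    -- an arbitrary `K`-subgenerated right `T`-module `M`
    (M : Type*) [AddCommGroup M] [Module Tᵐᵒᵖ M]
    [Module Aᵐᵒᵖ M] (hMA : ∀ (a : A) (m : M), op a • m = op (ηT a) • m)
    [Module Sᵐᵒᵖ (NCT.T A M B)]
    (hactM : ∀ (s : S) (m : M) (b : B),
      op s • NCT.tmul A M B m b = NCT.tmul A M B (op (ξ s) • m) b)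
    (hM : IsSubgenBy T K M) :
    IsSubgenBy S L (NCT.T A M B) :=
  statement0_general R A B β T ηT S ηS ξ hξ K hKA L hAB hactK hKB M hactM hM
end

section
/- Let R be a commutative ring, A and B R-algebras with an R-algebra morphism β : A → B, T an A-ring and S a B-ring with a morphism of A-rings ξ : S → T. Let K be a right T-module, L a right S-module, and θ : K → L a right A-linear map (L viewed as right A-module via β). If ξ((0_L : θ(k))) ⊆ (0_K : k) for every k ∈ K, where (0_L : θ(k)) ⊆ S and (0_K : k) ⊆ T denote the annihilators of θ(k) and k, then the induced right S-module K ⊗_A B is L-subgenerated. -/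
open MulOpposite

/-! A pure tensor `k ⊗ b` is killed by every `s` with `θ k ↼ s = 0`, since then `k ξ(s) = 0`;
so the pure tensors lie in the (additively closed) largest `L`-subgenerated part of `K ⊗_A B`,
which is therefore everything. -/

section SubgeneratedPart

variable (S : Type*) [Ring S] (L : Type*) [AddCommGroup L] [Module Sᵐᵒᵖ L]
  (X : Type*) [AddCommGroup X] [Module Sᵐᵒᵖ X]

/-- `Sp(σ[L], X)`, described elementwise. -/
def subgenPart : AddSubmonoid X where
  carrier := {x | ∃ W : Finset L, ∀ s : S, (∀ w ∈ W, op s • w = 0) → op s • x = 0}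
  zero_mem' := ⟨∅, fun s _ => smul_zero _⟩
  add_mem' := by
    classical
    rintro x y ⟨W₁, h₁⟩ ⟨W₂, h₂⟩
    refine ⟨W₁ ∪ W₂, fun s hs => ?_⟩
    rw [smul_add, h₁ s fun w hw => hs w (Finset.mem_union_left _ hw),
      h₂ s fun w hw => hs w (Finset.mem_union_right _ hw), add_zero]

lemma isSubgenBy_iff_subgenPart_eq_top : IsSubgenBy S L X ↔ subgenPart S L X = ⊤ :=
  (AddSubmonoid.eq_top_iff' (subgenPart S L X)).symm

end SubgeneratedPart

lemma NCT.eq_top_of_tmul_mem {A : Type*} [Ring A] {M : Type*} [AddCommGroup M]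
    [Module Aᵐᵒᵖ M] {N : Type*} [AddCommGroup N] [Module A N] {P : AddSubmonoid (NCT.T A M N)}
    (h : ∀ m n, NCT.tmul A M N m n ∈ P) : P = ⊤ :=
  (AddSubmonoid.eq_top_iff' P).2 fun z => NCT.induction_on z P.zero_mem h fun _ _ => P.add_mem

open MulOpposite NCT in
theorem statement1_general
    (A : Type*) [Ring A]
    (B : Type*) [Ring B]
    (T : Type*) [Ring T]
    (S : Type*) [Ring S]
    (ξ : S →+* T)
    -- `K` a right `T`-module, with its restricted right `A`-module structure
    (K : Type*) [AddCommGroup K] [Module Tᵐᵒᵖ K]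
    [Module Aᵐᵒᵖ K]
    -- `L` a right `S`-module
    (L : Type*) [AddCommGroup L] [Module Sᵐᵒᵖ L]
    [Module A B]
    (θ : K →+ L)
    -- the right `S`-module structure on `K ⊗_A B`
    [Module Sᵐᵒᵖ (NCT.T A K B)]
    (hact : ∀ (s : S) (k : K) (b : B),
      op s • NCT.tmul A K B k b = NCT.tmul A K B (op (ξ s) • k) b)
    -- `ξ((0_L : θ(k))) ⊆ (0_K : k)` for every `k`
    (hann : ∀ (k : K) (s : S), op s • θ k = 0 → op (ξ s) • k = 0) :
    IsSubgenBy S L (NCT.T A K B) := by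
  rw [isSubgenBy_iff_subgenPart_eq_top]
  refine NCT.eq_top_of_tmul_mem fun k b => ⟨{θ k}, fun s hs => ?_⟩
  rw [hact, hann k s (hs _ (Finset.mem_singleton_self _)), NCT.zero_tmul]

open MulOpposite NCT in
/-- Let `R` be a commutative ring, `A` and `B` `R`-algebras with an `R`-algebra morphism
`β : A → B`, `T` an `A`-ring (given by its unit `ηT : A → T`) and `S` a `B`-ring (unit
`ηS : B → S`) with a morphism of `A`-rings `ξ : S → T`.  Let `K` be a right `T`-module and
`L` a right `S`-module, and `θ : K → L` a right `A`-linear map (`L` viewed as a right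
`A`-module via `β`).  If `ξ((0_L : θ(k))) ⊆ (0_K : k)` for every `k ∈ K`, then the induced
right `S`-module `K ⊗_A B` (with `S`-action `(k ⊗ b) ↼ s = k ξ(s) ⊗ b`) is `L`-subgenerated. -/
theorem statement1
    (R : Type*) [CommRing R] (A : Type*) [Ring A] [Algebra R A]
    (B : Type*) [Ring B] [Algebra R B] (β : A →ₐ[R] B)
    (T : Type*) [Ring T] (ηT : A →+* T)
    (S : Type*) [Ring S] (ηS : B →+* S)
    (ξ : S →+* T) (hξ : ∀ a : A, ξ (ηS (β a)) = ηT a)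
    -- `K` a right `T`-module, with its restricted right `A`-module structure
    (K : Type*) [AddCommGroup K] [Module Tᵐᵒᵖ K]
    [Module Aᵐᵒᵖ K] (hKA : ∀ (a : A) (k : K), op a • k = op (ηT a) • k)
    -- `L` a right `S`-module
    (L : Type*) [AddCommGroup L] [Module Sᵐᵒᵖ L]
    -- `B` as a left `A`-module via `β`
    [Module A B] (hAB : ∀ (a : A) (b : B), a • b = β a * b)
    -- `θ : K → L` right `A`-linear
    (θ : K →+ L) (hθ : ∀ (a : A) (k : K), θ (op a • k) = op (ηS (β a)) • θ k)
    -- the right `S`-module structure on `K ⊗_A B`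
    [Module Sᵐᵒᵖ (NCT.T A K B)]
    (hact : ∀ (s : S) (k : K) (b : B),
      op s • NCT.tmul A K B k b = NCT.tmul A K B (op (ξ s) • k) b)
    -- `ξ((0_L : θ(k))) ⊆ (0_K : k)` for every `k`
    (hann : ∀ (k : K) (s : S), op s • θ k = 0 → op (ξ s) • k = 0) :
    IsSubgenBy S L (NCT.T A K B) :=
  statement1_general A B T S ξ K L θ hact hann
end

section
/- Let R be a commutative ring, A and B R-algebras with an R-algebra morphism β : A → B, T an A-ring and S a B-ring with a morphism of A-rings ξ : S → T. Let K be a right T-module and L a right S-module, and assume the induced right S-module K ⊗_A B is L-subgenerated. Define the coinduction functor Coind_L^K : σ[L_S] → σ[K_T] by Coind_L^K(N) := Sp(σ[K_T], Hom_{−S}(T ⊗_A B, N)). Then there are isomorphisms Hom_{−S}(M ⊗_A B, N) ≅ Hom_{−T}(M, Coind_L^K(N)), functorial in M ∈ σ[K_T] and N ∈ σ[L_S]; i.e. (− ⊗_A B, Coind_L^K(−)) is an adjoint pair of covariant functors. -/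
open MulOpposite

/-! ## STATEMENT 3 -/

open MulOpposite NCT

section Statement3

variable (R : Type*) [CommRing R] (A : Type*) [Ring A] [Algebra R A]
variable (B : Type*) [Ring B] [Algebra R B] (β : A →ₐ[R] B)
variable (T : Type*) [Ring T] (ηT : A →+* T)
variable (S : Type*) [Ring S] (ηS : B →+* S) (ξ : S →+* T)
variable [Module Aᵐᵒᵖ T] [Module A B]
variable [SMulCommClass T Aᵐᵒᵖ T] [Module Sᵐᵒᵖ (NCT.T A T B)]
variable [SMulCommClass T Sᵐᵒᵖ (NCT.T A T B)]

/-- Left multiplication by `t̃ ∈ T` on `T ⊗_A B`, as a morphism of right `S`-modules;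
this is the right `T`-module structure on `Hom_{-S}(T ⊗_A B, N)`,
`(φ ↼ t̃)(Σ tᵢ ⊗ bᵢ) = φ(Σ t̃ tᵢ ⊗ bᵢ)`. -/
noncomputable def lmulTB (t : T) : NCT.T A T B →ₗ[Sᵐᵒᵖ] NCT.T A T B where
  toFun z := t • z
  map_add' := smul_add t
  map_smul' σ z := by (try dsimp only); rw [RingHom.id_apply, smul_comm]

/-- Membership in the trace `Sp(σ[K_T], Hom_{-S}(T ⊗_A B, N))`:  `φ` is annihilated by the
annihilator of some finite subset of `K`. -/
noncomputable def SpCond (K : Type*) [AddCommGroup K] [Module Tᵐᵒᵖ K]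
    (N : Type*) [AddCommGroup N] [Module Sᵐᵒᵖ N]
    (φ : NCT.T A T B →ₗ[Sᵐᵒᵖ] N) : Prop :=
  ∃ W : Finset K, ∀ t : T, (∀ w ∈ W, op t • w = 0) →
    φ.comp (lmulTB A B T S t) = 0

end Statement3

/-!
Since `M ⊗_A B ≅ M ⊗_T (T ⊗_A B)`, the bijection is the tensor–hom adjunction for the
`T`-`S`-bimodule `T ⊗_A B`: `f` corresponds to `m ↦ (t ⊗ b ↦ f (m t ⊗ b))`, with inverse
`g ↦ (m ⊗ b ↦ g m (1 ⊗ b))`. Passing to the trace `Coind_L^K(N)` costs nothing: `g` is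
`T`-linear, so every annihilator condition satisfied by `m ∈ σ[K_T]` is satisfied by `g m`.
-/

namespace NCT

variable {A M N : Type*} [Ring A] [AddCommGroup M] [Module Aᵐᵒᵖ M] [AddCommGroup N] [Module A N]
variable {R P : Type*} [Semiring R] [AddCommGroup P] [Module R P] [Module R (T A M N)]

theorem linearMap_ext {f g : T A M N →ₗ[R] P}
    (H : ∀ m n, f (tmul A M N m n) = g (tmul A M N m n)) : f = g :=
  LinearMap.toAddMonoidHom_injective (hom_ext H)

noncomputable def liftₗ (f : M → N → P)
    (h₁ : ∀ m m' n, f (m + m') n = f m n + f m' n)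
    (h₂ : ∀ m n n', f m (n + n') = f m n + f m n')
    (hb : ∀ (a : A) m n, f (op a • m) n = f m (a • n))
    (hsmul : ∀ (r : R) m n, lift₂ f h₁ h₂ hb (r • tmul A M N m n) = r • f m n) :
    T A M N →ₗ[R] P where
  toFun := lift₂ f h₁ h₂ hb
  map_add' := map_add _
  map_smul' r z := by
    induction z using induction_on with
    | zero => rw [smul_zero, map_zero, smul_zero]
    | tm m n => exact hsmul r m n
    | add x y hx hy => rw [smul_add, map_add, map_add, hx, hy, smul_add]

end NCT

section Adjunction

variable {A B T S : Type*} [Ring A] [Ring B] [Ring T] [Ring S] {ηT : A →+* T} {ξ : S →+* T}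
variable [Module Aᵐᵒᵖ T] [Module A B] [Module Sᵐᵒᵖ (NCT.T A T B)]
variable {M : Type*} [AddCommGroup M] [Module Tᵐᵒᵖ M] [Module Aᵐᵒᵖ M] [Module Sᵐᵒᵖ (NCT.T A M B)]
variable {N : Type*} [AddCommGroup N] [Module Sᵐᵒᵖ N]
variable (hTA : ∀ (a : A) (t : T), op a • t = t * ηT a)
variable (hactT : ∀ (s : S) (t : T) (b : B),
  op s • NCT.tmul A T B t b = NCT.tmul A T B (t * ξ s) b)
variable (hMA : ∀ (a : A) (m : M), op a • m = op (ηT a) • m)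
variable (hactM : ∀ (s : S) (m : M) (b : B),
  op s • NCT.tmul A M B m b = NCT.tmul A M B (op (ξ s) • m) b)

noncomputable def curryTensor (f : NCT.T A M B →ₗ[Sᵐᵒᵖ] N) :
    M →+ (NCT.T A T B →ₗ[Sᵐᵒᵖ] N) :=
  AddMonoidHom.mk'
    (fun m => NCT.liftₗ (fun t b => f (NCT.tmul A M B (op t • m) b))
      (fun t t' b => by simp only [op_add, add_smul, NCT.add_tmul, map_add])
      (fun t b b' => by simp only [NCT.tmul_add, map_add])
      (fun a t b => by simp only [hTA, op_mul, mul_smul, ← hMA, NCT.balanced])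
      (fun σ t b => by
        rw [← op_unop σ, hactT, NCT.lift₂_tmul, op_mul, mul_smul, ← hactM, map_smul]))
    (fun m m' => NCT.linearMap_ext fun t b => by
      simp only [NCT.liftₗ, LinearMap.coe_mk, AddHom.coe_mk, NCT.lift₂_tmul,
        LinearMap.add_apply, smul_add, NCT.add_tmul, map_add])

@[simp] theorem curryTensor_tmul (f : NCT.T A M B →ₗ[Sᵐᵒᵖ] N) (m : M) (t : T) (b : B) :
    curryTensor hTA hactT hMA hactM f m (NCT.tmul A T B t b)
      = f (NCT.tmul A M B (op t • m) b) := rfl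

variable [SMulCommClass T Aᵐᵒᵖ T] [SMulCommClass T Sᵐᵒᵖ (NCT.T A T B)]

noncomputable def uncurryTensor (g : M →+ (NCT.T A T B →ₗ[Sᵐᵒᵖ] N))
    (hg : ∀ (t : T) (m : M), g (op t • m) = (g m).comp (lmulTB A B T S t)) :
    NCT.T A M B →ₗ[Sᵐᵒᵖ] N :=
  have hg' (t : T) (m : M) (z : NCT.T A T B) : g (op t • m) z = g m (t • z) := by
    rw [hg]; rfl
  NCT.liftₗ (fun m b => g m (NCT.tmul A T B 1 b))
    (fun m m' b => by simp only [map_add, LinearMap.add_apply])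
    (fun m b b' => by simp only [NCT.tmul_add, map_add])
    (fun a m b => by
      rw [hMA, hg', NCT.smul_tmul', smul_eq_mul, mul_one, ← NCT.balanced, hTA, one_mul])
    (fun σ m b => by
      rw [← op_unop σ, hactM, NCT.lift₂_tmul, hg', NCT.smul_tmul', smul_eq_mul, mul_one,
        ← map_smul, hactT, one_mul])

@[simp] theorem uncurryTensor_tmul (g : M →+ (NCT.T A T B →ₗ[Sᵐᵒᵖ] N))
    (hg : ∀ (t : T) (m : M), g (op t • m) = (g m).comp (lmulTB A B T S t)) (m : M) (b : B) :
    uncurryTensor hTA hactT hMA hactM g hg (NCT.tmul A M B m b)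
      = g m (NCT.tmul A T B 1 b) := rfl

theorem curryTensor_smul (f : NCT.T A M B →ₗ[Sᵐᵒᵖ] N) (t : T) (m : M) :
    curryTensor hTA hactT hMA hactM f (op t • m)
      = (curryTensor hTA hactT hMA hactM f m).comp (lmulTB A B T S t) :=
  NCT.linearMap_ext fun t' b => by
    show f (NCT.tmul A M B (op t' • op t • m) b) = f (NCT.tmul A M B (op (t * t') • m) b)
    rw [op_mul, mul_smul]

theorem uncurryTensor_curryTensor (f : NCT.T A M B →ₗ[Sᵐᵒᵖ] N) :
    uncurryTensor hTA hactT hMA hactM (curryTensor hTA hactT hMA hactM f)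
      (curryTensor_smul hTA hactT hMA hactM f) = f :=
  NCT.linearMap_ext fun m b => by
    rw [uncurryTensor_tmul, curryTensor_tmul, op_one, one_smul]

theorem curryTensor_uncurryTensor (g : M →+ (NCT.T A T B →ₗ[Sᵐᵒᵖ] N))
    (hg : ∀ (t : T) (m : M), g (op t • m) = (g m).comp (lmulTB A B T S t)) :
    curryTensor hTA hactT hMA hactM (uncurryTensor hTA hactT hMA hactM g hg) = g :=
  AddMonoidHom.ext fun m => NCT.linearMap_ext fun t b => by
    rw [curryTensor_tmul, uncurryTensor_tmul, hg]
    show g m (t • NCT.tmul A T B 1 b) = _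
    rw [NCT.smul_tmul', smul_eq_mul, mul_one]

noncomputable def tensorHomEquiv :
    (NCT.T A M B →ₗ[Sᵐᵒᵖ] N) ≃ {g : M →+ (NCT.T A T B →ₗ[Sᵐᵒᵖ] N) //
      ∀ (t : T) (m : M), g (op t • m) = (g m).comp (lmulTB A B T S t)} where
  toFun f := ⟨curryTensor hTA hactT hMA hactM f, curryTensor_smul hTA hactT hMA hactM f⟩
  invFun g := uncurryTensor hTA hactT hMA hactM g.1 g.2
  left_inv := uncurryTensor_curryTensor hTA hactT hMA hactM
  right_inv g := Subtype.ext (curryTensor_uncurryTensor hTA hactT hMA hactM g.1 g.2)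

end Adjunction

theorem spCond_of_isSubgenBy {A B T S : Type*} [Ring A] [Ring B] [Ring T] [Ring S]
    [Module Aᵐᵒᵖ T] [Module A B] [SMulCommClass T Aᵐᵒᵖ T] [Module Sᵐᵒᵖ (NCT.T A T B)]
    [SMulCommClass T Sᵐᵒᵖ (NCT.T A T B)]
    {K M N : Type*} [AddCommGroup K] [Module Tᵐᵒᵖ K] [AddCommGroup M] [Module Tᵐᵒᵖ M]
    [AddCommGroup N] [Module Sᵐᵒᵖ N] (hM : IsSubgenBy T K M)
    (g : M →+ (NCT.T A T B →ₗ[Sᵐᵒᵖ] N))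
    (hg : ∀ (t : T) (m : M), g (op t • m) = (g m).comp (lmulTB A B T S t)) (m : M) :
    SpCond A B T S K N (g m) := by
  obtain ⟨W, hW⟩ := hM m
  exact ⟨W, fun t ht => by rw [← hg, hW t ht, map_zero]⟩

section Statement3

variable (R : Type*) [CommRing R] (A : Type*) [Ring A] [Algebra R A]
variable (B : Type*) [Ring B] [Algebra R B] (β : A →ₐ[R] B)
variable (T : Type*) [Ring T] (ηT : A →+* T)
variable (S : Type*) [Ring S] (ηS : B →+* S) (ξ : S →+* T)
variable [Module Aᵐᵒᵖ T] [Module A B]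
variable [SMulCommClass T Aᵐᵒᵖ T] [Module Sᵐᵒᵖ (NCT.T A T B)]
variable [SMulCommClass T Sᵐᵒᵖ (NCT.T A T B)]

theorem statement3
    -- the `A`-bimodule structure of the `A`-ring `T` and the `S`-module structure on `T ⊗_A B`
    (hTA : ∀ (a : A) (t : T), op a • t = t * ηT a)
    (hactT : ∀ (s : S) (t : T) (b : B),
      op s • NCT.tmul A T B t b = NCT.tmul A T B (t * ξ s) b)
    -- `K` a right `T`-module, `L` a right `S`-module
    (K : Type*) [AddCommGroup K] [Module Tᵐᵒᵖ K]
    -- `M ∈ σ[K_T]`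
    (M : Type*) [AddCommGroup M] [Module Tᵐᵒᵖ M]
    [Module Aᵐᵒᵖ M] (hMA : ∀ (a : A) (m : M), op a • m = op (ηT a) • m)
    [Module Sᵐᵒᵖ (NCT.T A M B)]
    (hactM : ∀ (s : S) (m : M) (b : B),
      op s • NCT.tmul A M B m b = NCT.tmul A M B (op (ξ s) • m) b)
    (hM : IsSubgenBy T K M)
    -- `N ∈ σ[L_S]`
    (N : Type*) [AddCommGroup N] [Module Sᵐᵒᵖ N] :
    ∃ e : (NCT.T A M B →ₗ[Sᵐᵒᵖ] N) ≃
      {g : M →+ (NCT.T A T B →ₗ[Sᵐᵒᵖ] N) //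
        (∀ (t : T) (m : M), g (op t • m) = (g m).comp (lmulTB A B T S t)) ∧
        (∀ m : M, SpCond A B T S K N (g m))},
      ∀ (f : NCT.T A M B →ₗ[Sᵐᵒᵖ] N) (m : M) (t : T) (b : B),
        ((e f).1 m) (NCT.tmul A T B t b) = f (NCT.tmul A M B (op t • m) b) :=
  ⟨(tensorHomEquiv hTA hactT hMA hactM).trans <| Equiv.subtypeEquivRight fun g =>
      (and_iff_left_of_imp (spCond_of_isSubgenBy hM g)).symm,
    fun _ _ _ _ => rfl⟩

end Statement3
end
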